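/- arXiv:1805.02483 — 2 statements merged into one kernel-verified Lean document; each statement's English description precedes it below -/
import Mathlib

section
/- The minimizer x₀ of f(x) = ℓ(ỹ·x) + (c/2)·Σ_j (x - a_j)² (with ỹ ∈ {-1,0,1}, c > 0, d ≥ 1) lies in the interval [b - 1/(c·d), b + 1/(c·d)], where b = (1/d)·Σ_j a_j; in particular, if c·d ≥ 1 it lies in [b-1, b+1]. -/
/-!
Completing the square, `f x = ℓ (ỹ x) + (c d / 2) (x - b)² + const`. Since `x ↦ ℓ (ỹ x)` is
`1`-Lipschitz, comparing `f x₀` with `f (b ± 1 / (c d))` shows that `x₀` cannot lie farther than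
`1 / (c d)` from `b`: the quadratic gain would exceed the largest possible loss in `ℓ`.
-/

open Finset Real Set NNReal

theorem sum_sub_sq_eq_card_mul_add {ι : Type*} (s : Finset ι) (a : ι → ℝ) {b : ℝ}
    (hb : ∑ i ∈ s, a i = #s * b) (x : ℝ) :
    ∑ i ∈ s, (x - a i) ^ 2 = #s * (x - b) ^ 2 + ∑ i ∈ s, (a i - b) ^ 2 := by
  have hcentered : ∑ i ∈ s, (a i - b) = 0 := by
    rw [sum_sub_distrib, hb, sum_const, nsmul_eq_mul, sub_self]
  calc ∑ i ∈ s, (x - a i) ^ 2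
      = ∑ i ∈ s, ((x - b) ^ 2 - 2 * (x - b) * (a i - b) + (a i - b) ^ 2) :=
        sum_congr rfl fun _ _ => by ring
    _ = #s * (x - b) ^ 2 + ∑ i ∈ s, (a i - b) ^ 2 := by
        rw [sum_add_distrib, sum_sub_distrib, ← mul_sum, hcentered, sum_const, nsmul_eq_mul]
        ring

theorem lipschitzWith_log_one_add_exp_neg : LipschitzWith 1 fun z : ℝ => log (1 + exp (-z)) := by
  refine LipschitzWith.of_le_add fun z w => ?_
  rw [dist_eq_norm, norm_eq_abs]
  have hgrowth : 1 + exp (-z) ≤ exp |z - w| * (1 + exp (-w)) := by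
    have hone : 1 ≤ exp |z - w| := one_le_exp (abs_nonneg _)
    have hexp : exp (-z) ≤ exp |z - w| * exp (-w) := by
      rw [← exp_add]
      exact exp_le_exp.2 (by linarith [neg_abs_le (z - w)])
    linarith
  calc log (1 + exp (-z)) ≤ log (exp |z - w| * (1 + exp (-w))) :=
        log_le_log (by positivity) hgrowth
    _ = log (1 + exp (-w)) + |z - w| := by
        rw [log_mul (by positivity) (by positivity), log_exp, add_comm]

theorem abs_le_of_forall_sq_sub_sq_le {u₀ m : ℝ} (h : ∀ u, u₀ ^ 2 - u ^ 2 ≤ 2 * m * |u₀ - u|) :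
    |u₀| ≤ m := by
  by_contra! hfar
  -- comparing with `u = ± m` gives `(|u₀| - m)² ≤ 0`
  rcases le_total 0 u₀ with hu₀ | hu₀
  · rw [abs_of_nonneg hu₀] at hfar
    have := h m
    rw [abs_of_pos (by linarith)] at this
    nlinarith
  · rw [abs_of_nonpos hu₀] at hfar
    have := h (-m)
    rw [abs_of_neg (by linarith)] at this
    nlinarith

theorem abs_sub_le_of_isMinOn_add_sq {g : ℝ → ℝ} {K : ℝ≥0} (hg : LipschitzWith K g)
    {k b x₀ : ℝ} (hk : 0 < k) (hmin : IsMinOn (fun x => g x + k / 2 * (x - b) ^ 2) univ x₀) :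
    |x₀ - b| ≤ K / k := by
  refine abs_le_of_forall_sq_sub_sq_le fun u => ?_
  have hcmp := isMinOn_univ_iff.1 hmin (u + b)
  rw [add_sub_cancel_right] at hcmp
  have hlip : g (u + b) - g x₀ ≤ K * |x₀ - b - u| := by
    have := (le_abs_self _).trans (hg.dist_le_mul (u + b) x₀)
    rwa [Real.dist_eq, abs_sub_comm, sub_add_eq_sub_sub_swap] at this
  have hgain : k / 2 * ((x₀ - b) ^ 2 - u ^ 2) ≤ K * |x₀ - b - u| := by linarith
  field_simp
  linarith

theorem minimizer_in_interval
    (ytil : ℝ) (hy : ytil ∈ ({-1, 0, 1} : Set ℝ))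
    (c : ℝ) (hc : 0 < c)
    (d : ℕ) (hd : 1 ≤ d) (a : Fin d → ℝ)
    (b : ℝ) (hb : b = (1 / (d : ℝ)) * ∑ j, a j)
    (x₀ : ℝ)
    (hmin : ∀ x : ℝ,
      Real.log (1 + Real.exp (-(ytil * x₀))) + (c / 2) * ∑ j, (x₀ - a j) ^ 2
        ≤ Real.log (1 + Real.exp (-(ytil * x))) + (c / 2) * ∑ j, (x - a j) ^ 2) :
    x₀ ∈ Set.Icc (b - 1 / (c * (d : ℝ))) (b + 1 / (c * (d : ℝ)))
      ∧ (1 ≤ c * (d : ℝ) → x₀ ∈ Set.Icc (b - 1) (b + 1)) := by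
  have hcd : 0 < c * d := mul_pos hc (Nat.cast_pos.2 hd)
  have hmean : ∑ j, a j = #(univ : Finset (Fin d)) * b := by
    rw [card_univ, Fintype.card_fin, hb]
    field_simp
  have hy₁ : ‖ytil‖₊ ≤ 1 := by
    rw [← NNReal.coe_le_one, coe_nnnorm, norm_eq_abs]
    rcases hy with rfl | rfl | rfl <;> norm_num
  have hlip : LipschitzWith ‖ytil‖₊ fun x => log (1 + exp (-(ytil * x))) := by
    have h := lipschitzWith_log_one_add_exp_neg.comp (lipschitzWith_smul ytil)
    rw [one_mul] at h
    exact h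
  have hcompleted :
      IsMinOn (fun x => log (1 + exp (-(ytil * x))) + c * d / 2 * (x - b) ^ 2) univ x₀ := by
    refine isMinOn_univ_iff.2 fun x => ?_
    have := hmin x
    simp only [sum_sub_sq_eq_card_mul_add univ a hmean, card_univ, Fintype.card_fin] at this
    linear_combination this
  have hclose : |b - x₀| ≤ 1 / (c * d) := by
    rw [abs_sub_comm]
    refine (abs_sub_le_of_isMinOn_add_sq hlip hcd hcompleted).trans ?_
    gcongr
    exact_mod_cast hy₁
  exact ⟨mem_Icc_iff_abs_le.1 hclose,
    fun h => mem_Icc_iff_abs_le.1 (hclose.trans ((div_le_one hcd).2 h))⟩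
end

section
/- Single-variable z-update of the TV proximal step: for fixed v, w ∈ ℝ and λ', W > 0, the minimizer (z₁, z₂) of g(z₁, z₂) = λ'·W·|z₁ - z₂| + (1/2)·(v - z₁)² + (1/2)·(w - z₂)² is given by z₁ = θ·v + (1-θ)·w and z₂ = θ·w + (1-θ)·v, where θ = max(1/2, 1 - λ'·W/|v - w|) when v ≠ w, and z₁ = z₂ = (v+w)/2 when |v - w| ≤ 2·λ'·W. -/
private lemma tv_aux2 (c v w p1 p2 : ℝ) (hc : 0 < c) (hd : |v - w| ≤ 2 * c) :
    (1 / 2) * (v - (v + w) / 2) ^ 2 + (1 / 2) * (w - (v + w) / 2) ^ 2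
      ≤ c * |p1 - p2| + (1 / 2) * (v - p1) ^ 2 + (1 / 2) * (w - p2) ^ 2 := by
  have h1 : (v - w) * (p1 - p2) ≤ |v - w| * |p1 - p2| := by
    rw [← abs_mul]; exact le_abs_self _
  have h2 : |v - w| * |p1 - p2| ≤ 2 * c * |p1 - p2| :=
    mul_le_mul_of_nonneg_right hd (abs_nonneg _)
  nlinarith [sq_nonneg (p1 - p2), sq_nonneg ((v - p1) + (w - p2)), abs_nonneg (p1 - p2)]

private lemma tv_aux1 (c v w p1 p2 : ℝ) (hc : 0 < c) :
    c * |v - w| - c ^ 2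
      ≤ c * |p1 - p2| + (1 / 2) * (v - p1) ^ 2 + (1 / 2) * (w - p2) ^ 2 := by
  have h5 : |v - w| - |p1 - p2| ≤ |(v - w) - (p1 - p2)| :=
    abs_sub_abs_le_abs_sub _ _
  have h5' := mul_le_mul_of_nonneg_left h5 hc.le
  nlinarith [sq_nonneg (|(v - w) - (p1 - p2)| - 2 * c), sq_abs ((v - w) - (p1 - p2)),
    sq_nonneg ((v - p1) + (w - p2)), abs_nonneg (p1 - p2)]

theorem tv_prox_z_update
    (v w lam W : ℝ) (hlam : 0 < lam) (hW : 0 < W) :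
    (v ≠ w →
      ∀ p : ℝ × ℝ,
        (let θ := max (1 / 2 : ℝ) (1 - lam * W / |v - w|);
          lam * W * |(θ * v + (1 - θ) * w) - (θ * w + (1 - θ) * v)|
            + (1 / 2) * (v - (θ * v + (1 - θ) * w)) ^ 2
            + (1 / 2) * (w - (θ * w + (1 - θ) * v)) ^ 2)
          ≤ lam * W * |p.1 - p.2| + (1 / 2) * (v - p.1) ^ 2
            + (1 / 2) * (w - p.2) ^ 2) ∧
    (|v - w| ≤ 2 * lam * W →
      ∀ p : ℝ × ℝ,
        lam * W * |((v + w) / 2) - ((v + w) / 2)|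
          + (1 / 2) * (v - (v + w) / 2) ^ 2 + (1 / 2) * (w - (v + w) / 2) ^ 2
          ≤ lam * W * |p.1 - p.2| + (1 / 2) * (v - p.1) ^ 2
            + (1 / 2) * (w - p.2) ^ 2) := by
  set c := lam * W with hcdef
  have hc : 0 < c := mul_pos hlam hW
  constructor
  · intro hvw p
    have hD : 0 < |v - w| := abs_pos.mpr (sub_ne_zero.mpr hvw)
    show (let θ := max (1 / 2 : ℝ) (1 - c / |v - w|);
          c * |(θ * v + (1 - θ) * w) - (θ * w + (1 - θ) * v)|
            + (1 / 2) * (v - (θ * v + (1 - θ) * w)) ^ 2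
            + (1 / 2) * (w - (θ * w + (1 - θ) * v)) ^ 2)
          ≤ c * |p.1 - p.2| + (1 / 2) * (v - p.1) ^ 2 + (1 / 2) * (w - p.2) ^ 2
    by_cases hcase : |v - w| ≤ 2 * c
    · have hθ : max (1 / 2 : ℝ) (1 - c / |v - w|) = 1 / 2 := by
        apply max_eq_left
        rw [sub_le_iff_le_add]
        have : (1 : ℝ) ≤ 1 / 2 + c / |v - w| ↔ 1 / 2 ≤ c / |v - w| := by constructor <;> intro <;> linarith
        rw [this, le_div_iff₀ hD]
        linarith
      simp only [hθ]
      have e1 : (1 / 2 : ℝ) * v + (1 - 1 / 2) * w = (v + w) / 2 := by ring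
      have e2 : (1 / 2 : ℝ) * w + (1 - 1 / 2) * v = (v + w) / 2 := by ring
      rw [e1, e2, sub_self, abs_zero, mul_zero, zero_add]
      exact tv_aux2 c v w p.1 p.2 hc hcase
    · push_neg at hcase
      have hθ : max (1 / 2 : ℝ) (1 - c / |v - w|) = 1 - c / |v - w| := by
        apply max_eq_right
        rw [le_sub_iff_add_le]
        have : (1 / 2 : ℝ) + c / |v - w| ≤ 1 ↔ c / |v - w| ≤ 1 / 2 := by constructor <;> intro <;> linarith
        rw [this, div_le_iff₀ hD]
        linarith
      simp only [hθ]
      set θ : ℝ := 1 - c / |v - w| with hθdef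
      have hDne : |v - w| ≠ 0 := ne_of_gt hD
      have e1 : (θ * v + (1 - θ) * w) - (θ * w + (1 - θ) * v) = (1 - 2 * c / |v - w|) * (v - w) := by
        rw [hθdef]; ring
      have hfac : (0 : ℝ) ≤ 1 - 2 * c / |v - w| := by
        rw [sub_nonneg, div_le_one hD]; linarith
      have e2 : |(1 - 2 * c / |v - w|) * (v - w)| = |v - w| - 2 * c := by
        rw [abs_mul, abs_of_nonneg hfac]
        field_simp
      have e3 : v - (θ * v + (1 - θ) * w) = c / |v - w| * (v - w) := by
        rw [hθdef]; ring
      have e4 : w - (θ * w + (1 - θ) * v) = -(c / |v - w| * (v - w)) := by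
        rw [hθdef]; ring
      have hsq : (v - w) ^ 2 ≠ 0 := pow_ne_zero _ (sub_ne_zero.mpr hvw)
      have e5 : (c / |v - w| * (v - w)) ^ 2 = c ^ 2 := by
        rw [mul_pow, div_pow, sq_abs, div_mul_cancel₀ _ hsq]
      rw [e1, e2, e3, e4, neg_pow, e5]
      calc c * (|v - w| - 2 * c) + 1 / 2 * c ^ 2 + 1 / 2 * ((-1) ^ 2 * c ^ 2)
          = c * |v - w| - c ^ 2 := by ring
        _ ≤ _ := tv_aux1 c v w p.1 p.2 hc
  · intro hd p
    have hd' : |v - w| ≤ 2 * c := by rw [hcdef, ← mul_assoc]; exact hd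
    rw [sub_self, abs_zero, mul_zero, zero_add]
    exact tv_aux2 c v w p.1 p.2 hc hd'
end
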